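/- Let (Ω, 𝒜, μ) be a measure space with μ a positive finite measure, let E be a separable real Banach space, and let F : Ω → Set E be a set-valued map admitting at least one Bochner integrable selection. Suppose that every Bochner integrable selection of F has Bochner integral equal to 0. Then there exists a Bochner integrable function x : Ω → E with ∫_Ω x dμ = 0 such that every Bochner integrable selection of F is μ-almost everywhere equal to x. -/

import Mathlib

/-!
Any two integrable selections `f`, `g` of `F` can be glued along a measurable set `s` into
the selection `s.piecewise f g`. All three have integral `0`, so comparing the integrals of
`s.piecewise f g` and `g` gives `∫ in s, f = ∫ in s, g` for every measurable `s`, which forces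
`f = g` almost everywhere.
-/

open MeasureTheory

theorem ae_piecewise_mem {Ω E : Type*} [MeasurableSpace Ω] {μ : Measure Ω} {f g : Ω → E}
    {F : Ω → Set E} (hfF : ∀ᵐ ω ∂μ, f ω ∈ F ω) (hgF : ∀ᵐ ω ∂μ, g ω ∈ F ω)
    (s : Set Ω) [DecidablePred (· ∈ s)] :
    ∀ᵐ ω ∂μ, s.piecewise f g ω ∈ F ω := by
  filter_upwards [hfF, hgF] with ω hf hg
  by_cases hω : ω ∈ s
  · simpa [hω] using hf
  · simpa [hω] using hg

section

variable {Ω E : Type*} [MeasurableSpace Ω] {μ : Measure Ω}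
  [NormedAddCommGroup E] [NormedSpace ℝ E] {f g : Ω → E}

theorem setIntegral_eq_of_integral_piecewise_eq (hf : Integrable f μ) (hg : Integrable g μ)
    {s : Set Ω} (hs : MeasurableSet s) [DecidablePred (· ∈ s)]
    (h : ∫ ω, s.piecewise f g ω ∂μ = ∫ ω, g ω ∂μ) :
    ∫ ω in s, f ω ∂μ = ∫ ω in s, g ω ∂μ := by
  rw [integral_piecewise hs hf.integrableOn hg.integrableOn, ← integral_add_compl hs hg] at h
  exact add_right_cancel h

theorem ae_eq_of_forall_integral_piecewise_eq [CompleteSpace E]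
    (hf : Integrable f μ) (hg : Integrable g μ)
    (h : ∀ s, MeasurableSet s → ∀ [DecidablePred (· ∈ s)],
      ∫ ω, s.piecewise f g ω ∂μ = ∫ ω, g ω ∂μ) :
    f =ᵐ[μ] g := by
  classical
  exact hf.ae_eq_of_forall_setIntegral_eq f g hg fun s hs _ ↦
    setIntegral_eq_of_integral_piecewise_eq hf hg hs (h s hs)

end

theorem aumann_integral_zero_implies_ae_singleton_general
    {Ω : Type*} [MeasurableSpace Ω] {μ : Measure Ω}
    {E : Type*} [NormedAddCommGroup E] [NormedSpace ℝ E] [CompleteSpace E]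
    (F : Ω → Set E)
    (hsel : ∃ f : Ω → E, Integrable f μ ∧ ∀ᵐ ω ∂μ, f ω ∈ F ω)
    (hF : ∀ f : Ω → E, Integrable f μ → (∀ᵐ ω ∂μ, f ω ∈ F ω) →
      ∫ ω, f ω ∂μ = 0) :
    ∃ x : Ω → E, Integrable x μ ∧ ∫ ω, x ω ∂μ = 0 ∧
      ∀ f : Ω → E, Integrable f μ → (∀ᵐ ω ∂μ, f ω ∈ F ω) → f =ᵐ[μ] x := by
  obtain ⟨g, hg, hgF⟩ := hsel
  refine ⟨g, hg, hF g hg hgF, fun f hf hfF ↦ ?_⟩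
  refine ae_eq_of_forall_integral_piecewise_eq hf hg fun s hs _ ↦ ?_
  rw [hF g hg hgF]
  exact hF _ (Integrable.piecewise hs hf.integrableOn hg.integrableOn)
    (ae_piecewise_mem hfF hgF s)

/-- If `F` has an integrable selection and every integrable selection has Bochner
integral `0`, then there is an integrable `x` with `∫ x dμ = 0` such that every
integrable selection of `F` equals `x` almost everywhere. -/
theorem aumann_integral_zero_implies_ae_singleton
    {Ω : Type*} [MeasurableSpace Ω] {μ : Measure Ω} [IsFiniteMeasure μ]
    {E : Type*} [NormedAddCommGroup E] [NormedSpace ℝ E] [CompleteSpace E]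
    [TopologicalSpace.SeparableSpace E]
    (F : Ω → Set E)
    (hsel : ∃ f : Ω → E, Integrable f μ ∧ ∀ᵐ ω ∂μ, f ω ∈ F ω)
    (hF : ∀ f : Ω → E, Integrable f μ → (∀ᵐ ω ∂μ, f ω ∈ F ω) →
      ∫ ω, f ω ∂μ = 0) :
    ∃ x : Ω → E, Integrable x μ ∧ ∫ ω, x ω ∂μ = 0 ∧
      ∀ f : Ω → E, Integrable f μ → (∀ᵐ ω ∂μ, f ω ∈ F ω) → f =ᵐ[μ] x :=
  aumann_integral_zero_implies_ae_singleton_general F hsel hF
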